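/- For every ε > 0 there exists a continuous map G : X → X with the following properties: (i) ‖G(p) − F(p)‖ < ε for every p ∈ X (Euclidean norm); (ii) G commutes with the reflection R(x,y) := (y,x), i.e. G∘R = R∘G; (iii) the open diagonal {(x,x) : 0 < x < 1} is G-invariant, so there is a continuous map h with G(x,x) = (h(x), h(x)) for 0 < x < 1; (iv) there exists σ > 0 such that, with x* := (3−√5)/2, the interval J := [x*, x* + 2σ] ⊂ (0,1) satisfies h(h(x)) = x* + 2(σ − |x − x* − σ|) for all x ∈ J; consequently h∘h restricted to J is topologically conjugate (via an affine homeomorphism) to the tent map T(t) := 1 − |2t − 1| on [0,1], and G exhibits one-dimensional chaos along the diagonal. -/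

import Mathlib

open Set

/-- The minimal RS flip-flop map. -/
noncomputable def F (p : ℝ × ℝ) : ℝ × ℝ :=
  (p.2 * (1 - p.1) / (p.1 + p.2 - p.1 * p.2),
   p.1 * (1 - p.2) / (p.1 + p.2 - p.1 * p.2))

/-- The domain X = [0,1]² minus the two corners (0,0) and (1,1). -/
def X : Set (ℝ × ℝ) :=
  (Icc (0:ℝ) 1 ×ˢ Icc (0:ℝ) 1) \ {((0:ℝ), (0:ℝ)), ((1:ℝ), (1:ℝ))}

/-- The Euclidean norm on ℝ². -/
noncomputable def euclNorm (p : ℝ × ℝ) : ℝ := Real.sqrt (p.1 ^ 2 + p.2 ^ 2)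

/-- The diagonal coordinate of the fixed point p*. -/
noncomputable def xstar : ℝ := (3 - Real.sqrt 5) / 2

/-! ### Auxiliary definitions -/

noncomputable def fd (m : ℝ) : ℝ := (1 - m) / (2 - m)
noncomputable def h0 (σ x : ℝ) : ℝ := xstar - Real.sqrt 2 * (σ - |x - xstar - σ|)
noncomputable def cut (σ t : ℝ) : ℝ := max 0 (min 1 (2 - |t| / (2 * σ)))
noncomputable def AF (x y : ℝ) : ℝ := y * (1 - x) / (x + y - x * y)
noncomputable def AA (σ x y : ℝ) : ℝ :=
  AF x y + cut σ ((x + y) / 2 - xstar) * cut σ (x - y) * (h0 σ ((x + y) / 2) - fd ((x + y) / 2))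

/-! ### Numeric facts -/

lemma sqrt5_lt : Real.sqrt 5 < 2.24 := by
  have : (Real.sqrt 5)^2 = 5 := Real.sq_sqrt (by norm_num)
  nlinarith [Real.sqrt_nonneg 5]
lemma sqrt5_gt : (2.23:ℝ) < Real.sqrt 5 := by
  have : (Real.sqrt 5)^2 = 5 := Real.sq_sqrt (by norm_num)
  nlinarith [Real.sqrt_nonneg 5]
lemma sqrt2_lt : Real.sqrt 2 < 1.5 := by
  have : (Real.sqrt 2)^2 = 2 := Real.sq_sqrt (by norm_num)
  nlinarith [Real.sqrt_nonneg 2]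
lemma sqrt2_gt : (1:ℝ) < Real.sqrt 2 := by
  have : (Real.sqrt 2)^2 = 2 := Real.sq_sqrt (by norm_num)
  nlinarith [Real.sqrt_nonneg 2]
lemma xstar_gt : (0.38:ℝ) < xstar := by have := sqrt5_lt; rw [xstar]; linarith
lemma xstar_lt : xstar < 0.385 := by have := sqrt5_gt; rw [xstar]; linarith
lemma xstar_sq : xstar^2 = 3*xstar - 1 := by
  have : (Real.sqrt 5)^2 = 5 := Real.sq_sqrt (by norm_num)
  rw [xstar]; nlinarith

/-! ### Closeness of `h0` and `fd` near `xstar` -/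

lemma fd_close {m : ℝ} (hm : m ≤ 1) : |fd m - xstar| ≤ |m - xstar| := by
  have h2m : (0:ℝ) < 2 - m := by linarith
  have key : fd m - xstar = (xstar - m) * (1 - xstar) / (2 - m) := by
    rw [fd]; field_simp; nlinarith [xstar_sq]
  rw [key, abs_div, abs_mul, abs_of_pos h2m]
  have hx1 : |1 - xstar| ≤ 1 := by
    rw [abs_of_pos (by linarith [xstar_gt, xstar_lt])]; linarith [xstar_gt]
  rw [abs_sub_comm xstar m, div_le_iff₀ h2m]
  nlinarith [abs_nonneg (m - xstar), mul_le_mul_of_nonneg_left hx1 (abs_nonneg (m - xstar))]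

lemma h0_close (σ m : ℝ) (hσ : 0 ≤ σ) : |h0 σ m - xstar| ≤ Real.sqrt 2 * |m - xstar| := by
  rw [h0]
  have h0' : xstar - Real.sqrt 2 * (σ - |m - xstar - σ|) - xstar
      = -(Real.sqrt 2 * (σ - |m - xstar - σ|)) := by ring
  rw [h0', abs_neg, abs_mul, abs_of_nonneg (Real.sqrt_nonneg 2)]
  have h1 : |σ - abs (m - xstar - σ)| ≤ |m - xstar| := by
    have h2 := abs_abs_sub_abs_le_abs_sub (m - xstar - σ) (-σ)
    rw [abs_neg, abs_of_nonneg hσ] at h2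
    rw [abs_sub_comm]
    calc |abs (m - xstar - σ) - σ| ≤ |m - xstar - σ - -σ| := h2
    _ = |m - xstar| := by ring_nf
  nlinarith [Real.sqrt_nonneg 2]

lemma delta_bound {σ m : ℝ} (hσ : 0 ≤ σ) (hm : m ≤ 1) :
    |h0 σ m - fd m| ≤ 5/2 * |m - xstar| := by
  have h1 := h0_close σ m hσ
  have h2 := fd_close hm
  have h3 := sqrt2_lt
  have h4 : |h0 σ m - fd m| ≤ |h0 σ m - xstar| + |xstar - fd m| := abs_sub_le _ _ _
  rw [abs_sub_comm xstar] at h4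
  nlinarith [abs_nonneg (m - xstar), Real.sqrt_nonneg 2]

/-! ### Cutoff lemmas -/

lemma cut_nonneg (σ t : ℝ) : 0 ≤ cut σ t := le_max_left _ _
lemma cut_le_one (σ t : ℝ) : cut σ t ≤ 1 := max_le (by norm_num) (min_le_left _ _)
lemma cut_zero (σ : ℝ) : cut σ 0 = 1 := by simp [cut]
lemma cut_eq_one {σ t : ℝ} (hσ : 0 < σ) (h : |t| ≤ 2*σ) : cut σ t = 1 := by
  rw [cut]
  have h1 : |t| / (2*σ) ≤ 1 := by rw [div_le_one (by linarith)]; linarith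
  have h2 : min 1 (2 - |t| / (2*σ)) = 1 := min_eq_left (by linarith)
  rw [h2]; simp
lemma cut_pos_lt {σ t : ℝ} (hσ : 0 < σ) (h : 0 < cut σ t) : |t| < 4*σ := by
  by_contra hc
  push_neg at hc
  have h1 : 2 - |t| / (2*σ) ≤ 0 := by
    rw [sub_nonpos, le_div_iff₀ (by linarith)]; linarith
  have h2 : cut σ t = 0 := by
    rw [cut, max_eq_left]; exact le_trans (min_le_right _ _) h1
  simp [h2] at h
lemma cut_symm (σ x y : ℝ) : cut σ (x - y) = cut σ (y - x) := by rw [cut, cut, abs_sub_comm]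
lemma cut_cont (σ : ℝ) : Continuous (fun t => cut σ t) :=
  continuous_const.max (continuous_const.min (continuous_const.sub (continuous_abs.div_const _)))

/-! ### `AF` lemmas -/

lemma AF_denom_pos {x y : ℝ} (hx : x ∈ Icc (0:ℝ) 1) (hy : y ∈ Icc (0:ℝ) 1)
    (hne : ¬(x = 0 ∧ y = 0)) : 0 < x + y - x * y := by
  obtain ⟨hx0, hx1⟩ := hx; obtain ⟨hy0, hy1⟩ := hy
  rcases eq_or_lt_of_le hy0 with h | h
  · have hx' : x ≠ 0 := fun hxx => hne ⟨hxx, h.symm⟩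
    have : 0 < x := lt_of_le_of_ne hx0 (Ne.symm hx')
    nlinarith
  · nlinarith [mul_nonneg hx0 (by linarith : (0:ℝ) ≤ 1 - y)]

lemma AF_mem {x y : ℝ} (hx : x ∈ Icc (0:ℝ) 1) (hy : y ∈ Icc (0:ℝ) 1)
    (hd : 0 < x + y - x * y) : AF x y ∈ Icc (0:ℝ) 1 := by
  obtain ⟨hx0, hx1⟩ := hx; obtain ⟨hy0, hy1⟩ := hy
  constructor
  · exact div_nonneg (by nlinarith) hd.le
  · rw [AF, div_le_one hd]; nlinarith

lemma AF_box {x y : ℝ} (hx : x ∈ Icc (0.35:ℝ) 0.415) (hy : y ∈ Icc (0.35:ℝ) 0.415) :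
    AF x y ∈ Icc (1/5:ℝ) (1/2) := by
  obtain ⟨hx0, hx1⟩ := hx; obtain ⟨hy0, hy1⟩ := hy
  have hd : (0:ℝ) < x + y - x * y := by nlinarith
  constructor
  · rw [AF, le_div_iff₀ hd]; nlinarith
  · rw [AF, div_le_iff₀ hd]; nlinarith

/-! ### Membership in X -/

lemma mem_X_iff {p : ℝ × ℝ} :
    p ∈ X ↔ (p.1 ∈ Icc (0:ℝ) 1 ∧ p.2 ∈ Icc (0:ℝ) 1) ∧
      ¬(p.1 = 0 ∧ p.2 = 0) ∧ ¬(p.1 = 1 ∧ p.2 = 1) := by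
  rw [X, Set.mem_diff, Set.mem_prod]
  constructor
  · rintro ⟨⟨h1, h2⟩, h3⟩
    refine ⟨⟨h1, h2⟩, ?_, ?_⟩
    · rintro ⟨ha, hb⟩; exact h3 (by simp [Prod.ext_iff, ha, hb])
    · rintro ⟨ha, hb⟩; exact h3 (by simp [Prod.ext_iff, ha, hb])
  · rintro ⟨⟨h1, h2⟩, h3, h4⟩
    refine ⟨⟨h1, h2⟩, ?_⟩
    intro hmem
    rcases hmem with h | h
    · exact h3 ⟨(Prod.ext_iff.1 h).1, (Prod.ext_iff.1 h).2⟩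
    · exact h4 ⟨(Prod.ext_iff.1 h).1, (Prod.ext_iff.1 h).2⟩

/-! ### Key bound when the cutoff is active -/

lemma cut_prod_pos {σ a b : ℝ} (hσ : 0 < σ) (hc : 0 < cut σ a * cut σ b) :
    |a| < 4*σ ∧ |b| < 4*σ := by
  have h1 : cut σ a ≠ 0 := fun h => by simp [h] at hc
  have h2 : cut σ b ≠ 0 := fun h => by simp [h] at hc
  exact ⟨cut_pos_lt hσ (lt_of_le_of_ne (cut_nonneg _ _) (Ne.symm h1)),
         cut_pos_lt hσ (lt_of_le_of_ne (cut_nonneg _ _) (Ne.symm h2))⟩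

lemma AA_corr_bound {σ x y : ℝ} (hσ : 0 < σ) (hσ' : σ ≤ 1/200)
    (hm : (x + y)/2 ≤ 1) :
    |AA σ x y - AF x y| ≤ 10 * σ := by
  have heq : AA σ x y - AF x y = cut σ ((x + y) / 2 - xstar) * cut σ (x - y) *
      (h0 σ ((x + y) / 2) - fd ((x + y) / 2)) := by rw [AA]; ring
  rw [heq, abs_mul, abs_mul]
  have h1 : |cut σ ((x + y) / 2 - xstar)| ≤ 1 := by
    rw [abs_of_nonneg (cut_nonneg _ _)]; exact cut_le_one _ _
  have h2 : |cut σ (x - y)| ≤ 1 := by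
    rw [abs_of_nonneg (cut_nonneg _ _)]; exact cut_le_one _ _
  rcases le_or_gt (cut σ ((x+y)/2 - xstar)) 0 with h | h
  · have h0' : cut σ ((x+y)/2 - xstar) = 0 := le_antisymm h (cut_nonneg _ _)
    rw [h0']; simp; positivity
  · have ha := cut_pos_lt hσ h
    have hδ := delta_bound (σ := σ) (m := (x+y)/2) hσ.le hm
    have hδ' : |h0 σ ((x + y) / 2) - fd ((x + y) / 2)| ≤ 10*σ := by linarith
    calc |cut σ ((x + y) / 2 - xstar)| * |cut σ (x - y)| * |h0 σ ((x + y) / 2) - fd ((x + y) / 2)|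
        ≤ 1 * 1 * (10*σ) := by
          apply mul_le_mul (mul_le_mul h1 h2 (abs_nonneg _) zero_le_one) hδ' (abs_nonneg _)
          norm_num
    _ = 10 * σ := by ring

lemma AA_pos_mem {σ x y : ℝ} (hσ : 0 < σ) (hσ' : σ ≤ 1/200)
    (hc : 0 < cut σ ((x + y) / 2 - xstar) * cut σ (x - y)) :
    AA σ x y ∈ Icc (3/20:ℝ) (11/20) := by
  obtain ⟨ha, hb⟩ := cut_prod_pos hσ hc
  have hxs1 := xstar_gt; have hxs2 := xstar_lt
  have hxx : |x - xstar| < 6*σ := by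
    have : x - xstar = ((x+y)/2 - xstar) + (x - y)/2 := by ring
    rw [this]
    calc |((x+y)/2 - xstar) + (x - y)/2| ≤ |(x+y)/2 - xstar| + |(x-y)/2| := abs_add_le _ _
    _ < 6*σ := by rw [abs_div]; simp only [abs_two]; linarith [abs_nonneg (x-y)]
  have hyy : |y - xstar| < 6*σ := by
    have : y - xstar = ((x+y)/2 - xstar) - (x - y)/2 := by ring
    rw [this]
    calc |((x+y)/2 - xstar) - (x - y)/2| ≤ |(x+y)/2 - xstar| + |(x-y)/2| := abs_sub _ _
    _ < 6*σ := by rw [abs_div]; simp only [abs_two]; linarith [abs_nonneg (x-y)]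
  rw [abs_lt] at hxx hyy ha
  have hxI : x ∈ Icc (0.35:ℝ) 0.415 := ⟨by linarith, by linarith⟩
  have hyI : y ∈ Icc (0.35:ℝ) 0.415 := ⟨by linarith, by linarith⟩
  have hAF := AF_box hxI hyI
  have hcorr := AA_corr_bound (σ := σ) (x := x) (y := y) hσ hσ' (by obtain ⟨_, h1⟩ := hxI; obtain ⟨_, h2⟩ := hyI; linarith)
  rw [abs_le] at hcorr
  obtain ⟨hAF1, hAF2⟩ := hAF
  constructor <;> [linarith; linarith]

lemma X_symm {p : ℝ × ℝ} (hp : p ∈ X) : (p.2, p.1) ∈ X := by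
  rw [mem_X_iff] at hp ⊢
  obtain ⟨⟨h1, h2⟩, h3, h4⟩ := hp
  exact ⟨⟨h2, h1⟩, fun ⟨a, b⟩ => h3 ⟨b, a⟩, fun ⟨a, b⟩ => h4 ⟨b, a⟩⟩

lemma h0_cont (σ : ℝ) : Continuous (fun x : ℝ => h0 σ x) := by
  unfold h0; fun_prop

lemma contAA (σ : ℝ) : ContinuousOn (fun p : ℝ × ℝ => AA σ p.1 p.2) X := by
  unfold AA
  apply ContinuousOn.add
  · unfold AF
    apply ContinuousOn.div (by fun_prop) (by fun_prop)
    intro p hp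
    obtain ⟨⟨h1, h2⟩, h3, _⟩ := mem_X_iff.1 hp
    exact (AF_denom_pos h1 h2 h3).ne'
  · apply ContinuousOn.mul
    · exact (((cut_cont σ).comp (by fun_prop)).mul ((cut_cont σ).comp (by fun_prop))).continuousOn
    · apply ContinuousOn.sub
      · exact ((h0_cont σ).comp
          (by fun_prop : Continuous (fun p : ℝ × ℝ => (p.1 + p.2) / 2))).continuousOn
      · unfold fd
        apply ContinuousOn.div (by fun_prop) (by fun_prop)
        intro p hp
        obtain ⟨⟨⟨_, h1⟩, ⟨_, h2⟩⟩, _⟩ := mem_X_iff.1 hp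
        intro h; linarith

lemma contHH (σ : ℝ) : ContinuousOn (fun x : ℝ => AA σ x x) (Ioo (0:ℝ) 1) := by
  unfold AA
  apply ContinuousOn.add
  · unfold AF
    apply ContinuousOn.div (by fun_prop) (by fun_prop)
    intro x hx
    obtain ⟨h1, h2⟩ := hx
    nlinarith
  · apply ContinuousOn.mul
    · exact (((cut_cont σ).comp (by fun_prop)).mul ((cut_cont σ).comp (by fun_prop))).continuousOn
    · apply ContinuousOn.sub
      · exact ((h0_cont σ).comp (by fun_prop : Continuous (fun x : ℝ => (x + x) / 2))).continuousOn
      · unfold fd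
        apply ContinuousOn.div (by fun_prop) (by fun_prop)
        intro x hx
        obtain ⟨h1, h2⟩ := hx
        intro h; linarith

set_option maxHeartbeats 2000000 in
/-- For every ε > 0 there is a continuous, diagonally symmetric map G : X → X which is
ε-close to F, leaves the open diagonal invariant (where it is given by a continuous
map h), and such that on an interval J = [x*, x*+2σ] the second iterate of h is a
shifted 2σ-scaled tent map; consequently h∘h on J is conjugate, via the affine
homeomorphism t ↦ x* + 2σt from [0,1] to J, to the tent map T(t) = 1 − |2t − 1|;
thus G exhibits one-dimensional chaos along the diagonal. -/
theorem perturbed_one_dimensional_chaos :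
    ∀ ε : ℝ, 0 < ε →
      ∃ G : ℝ × ℝ → ℝ × ℝ,
        ContinuousOn G X ∧ MapsTo G X X ∧
        (∀ p ∈ X, euclNorm (G p - F p) < ε) ∧
        (∀ p ∈ X, G (p.2, p.1) = ((G p).2, (G p).1)) ∧
        ∃ h : ℝ → ℝ,
          ContinuousOn h (Ioo (0:ℝ) 1) ∧
          (∀ x ∈ Ioo (0:ℝ) 1, h x ∈ Ioo (0:ℝ) 1 ∧ G (x, x) = (h x, h x)) ∧
          ∃ σ : ℝ, 0 < σ ∧ Icc xstar (xstar + 2 * σ) ⊆ Ioo (0:ℝ) 1 ∧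
            (∀ x ∈ Icc xstar (xstar + 2 * σ),
              h (h x) = xstar + 2 * (σ - |x - xstar - σ|)) ∧
            (∀ t ∈ Icc (0:ℝ) 1,
              h (h (xstar + 2 * σ * t)) = xstar + 2 * σ * (1 - |2 * t - 1|)) := by
  intro ε hε
  have hxg := xstar_gt
  have hxl := xstar_lt
  have hs2l := sqrt2_lt
  have hs2g := sqrt2_gt
  set σ : ℝ := min (ε / 15) (1 / 200) with hσdef
  have hσ : 0 < σ := lt_min (by linarith) (by norm_num)
  have hσ' : σ ≤ 1 / 200 := min_le_right _ _
  have hσε : 15 * σ ≤ ε := by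
    have h := min_le_left (ε / 15) (1 / 200)
    rw [← hσdef] at h; linarith
  -- the helper for the diagonal : h equals h0 near xstar
  have hh_eq : ∀ x : ℝ, 0 < x → x < 1 → |x - xstar| ≤ 2 * σ → AA σ x x = h0 σ x := by
    intro x hx0 hx1 hxc
    have hxx2 : (x + x) / 2 = x := by ring
    have hd : 0 < x + x - x * x := by nlinarith
    have hAFfd : AF x x = fd x := by
      rw [AF, fd, div_eq_div_iff hd.ne' (by nlinarith : (0:ℝ) < 2 - x).ne']; ring
    rw [AA, hxx2, sub_self, cut_zero, cut_eq_one hσ hxc, hAFfd]; ring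
  -- the tent property
  have htent : ∀ x ∈ Icc xstar (xstar + 2 * σ),
      AA σ (AA σ x x) (AA σ x x) = xstar + 2 * (σ - |x - xstar - σ|) := by
    intro x hx
    obtain ⟨hx1, hx2⟩ := hx
    have hu1 : 0 ≤ σ - |x - xstar - σ| := by
      rw [sub_nonneg, abs_le]; constructor <;> linarith
    have hu2 : σ - |x - xstar - σ| ≤ σ := by linarith [abs_nonneg (x - xstar - σ)]
    have hstep1 : AA σ x x = h0 σ x :=
      hh_eq x (by linarith) (by linarith) (by rw [abs_le]; constructor <;> linarith)
    have hyval : h0 σ x = xstar - Real.sqrt 2 * (σ - |x - xstar - σ|) := rfl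
    have hsu : 0 ≤ Real.sqrt 2 * (σ - |x - xstar - σ|) := by positivity
    have hsu2 : Real.sqrt 2 * (σ - |x - xstar - σ|) ≤ 2 * σ := by nlinarith
    have hy0 : 0 < h0 σ x := by rw [hyval]; linarith
    have hy1 : h0 σ x < 1 := by rw [hyval]; linarith
    have hyc : |h0 σ x - xstar| ≤ 2 * σ := by
      rw [hyval, show xstar - Real.sqrt 2 * (σ - |x - xstar - σ|) - xstar
        = -(Real.sqrt 2 * (σ - |x - xstar - σ|)) from by ring, abs_neg, abs_of_nonneg hsu]
      linarith
    have hstep2 : AA σ (h0 σ x) (h0 σ x) = h0 σ (h0 σ x) := hh_eq _ hy0 hy1 hyc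
    have habs : |h0 σ x - xstar - σ| = Real.sqrt 2 * (σ - |x - xstar - σ|) + σ := by
      rw [hyval, show xstar - Real.sqrt 2 * (σ - |x - xstar - σ|) - xstar - σ
        = -(Real.sqrt 2 * (σ - |x - xstar - σ|) + σ) from by ring, abs_neg,
        abs_of_nonneg (by linarith)]
    have hss : Real.sqrt 2 * Real.sqrt 2 = 2 := Real.mul_self_sqrt (by norm_num)
    have hfin : h0 σ (h0 σ x) = xstar + 2 * (σ - |x - xstar - σ|) := by
      rw [show h0 σ (h0 σ x) = xstar - Real.sqrt 2 * (σ - |h0 σ x - xstar - σ|) from rfl, habs]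
      linear_combination (σ - |x - xstar - σ|) * hss
    rw [hstep1, hstep2, hfin]
  refine ⟨fun p => (AA σ p.1 p.2, AA σ p.2 p.1), ?_, ?_, ?_, ?_,
    fun x => AA σ x x, contHH σ, ?_, σ, hσ, ?_, htent, ?_⟩
  · -- continuity
    exact ContinuousOn.prodMk (contAA σ) ((contAA σ).comp continuous_swap.continuousOn
      (fun p hp => X_symm hp))
  · -- maps to
    intro p hp
    obtain ⟨⟨hx, hy⟩, h00, h11⟩ := mem_X_iff.1 hp
    have hd : 0 < p.1 + p.2 - p.1 * p.2 := AF_denom_pos hx hy h00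
    have hd' : 0 < p.2 + p.1 - p.2 * p.1 := by nlinarith
    have hmsym : (p.2 + p.1) / 2 = (p.1 + p.2) / 2 := by ring
    rcases eq_or_lt_of_le (mul_nonneg (cut_nonneg σ ((p.1 + p.2) / 2 - xstar))
        (cut_nonneg σ (p.1 - p.2))) with h | h
    · -- cutoff vanishes : G p = F p ∈ X
      have e1 : AA σ p.1 p.2 = AF p.1 p.2 := by rw [AA, ← h]; ring
      have e2 : AA σ p.2 p.1 = AF p.2 p.1 := by
        rw [AA, hmsym, cut_symm σ p.2 p.1, ← h]; ring
      rw [mem_X_iff]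
      simp only [e1, e2]
      refine ⟨⟨AF_mem hx hy hd, AF_mem hy hx hd'⟩, ?_, ?_⟩
      · rintro ⟨ha, hb⟩
        rw [AF, div_eq_zero_iff] at ha hb
        rcases ha with ha | ha
        · rcases mul_eq_zero.1 ha with h1 | h1
          · rcases hb with hb | hb
            · rcases mul_eq_zero.1 hb with h2 | h2
              · exact h00 ⟨h2, h1⟩
              · exact h11 (False.elim (by rw [h1] at h2; norm_num at h2))
            · linarith
          · rcases hb with hb | hb
            · rcases mul_eq_zero.1 hb with h2 | h2
              · linarith
              · exact h11 ⟨by linarith, by linarith⟩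
            · linarith
        · linarith
      · rintro ⟨ha, hb⟩
        rw [AF, div_eq_one_iff_eq hd.ne'] at ha
        rw [AF, div_eq_one_iff_eq hd'.ne'] at hb
        exact h00 ⟨by nlinarith, by nlinarith⟩
    · -- cutoff active : both coordinates in [3/20, 11/20]
      have hb1 := AA_pos_mem (σ := σ) (x := p.1) (y := p.2) hσ hσ' h
      have hb2 : AA σ p.2 p.1 ∈ Icc (3/20 : ℝ) (11/20) := by
        apply AA_pos_mem (σ := σ) (x := p.2) (y := p.1) hσ hσ'
        rw [hmsym, cut_symm σ p.2 p.1]; exact h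
      obtain ⟨hb11, hb12⟩ := hb1
      obtain ⟨hb21, hb22⟩ := hb2
      rw [mem_X_iff]
      exact ⟨⟨⟨by linarith, by linarith⟩, ⟨by linarith, by linarith⟩⟩,
        fun ⟨ha, _⟩ => by linarith, fun ⟨ha, _⟩ => by linarith⟩
  · -- closeness
    intro p hp
    obtain ⟨⟨hx, hy⟩, h00, h11⟩ := mem_X_iff.1 hp
    have hF : F p = (AF p.1 p.2, AF p.2 p.1) := by
      ext <;> simp only [F, AF] <;> ring
    have hdsym : AA σ p.2 p.1 - AF p.2 p.1 = AA σ p.1 p.2 - AF p.1 p.2 := by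
      rw [AA, AA, show (p.2 + p.1) / 2 = (p.1 + p.2) / 2 from by ring, cut_symm σ p.2 p.1]
      ring
    have hsub : (AA σ p.1 p.2, AA σ p.2 p.1) - F p
        = (AA σ p.1 p.2 - AF p.1 p.2, AA σ p.1 p.2 - AF p.1 p.2) := by
      rw [hF, Prod.mk_sub_mk, hdsym]
    have hb := AA_corr_bound (σ := σ) (x := p.1) (y := p.2) hσ hσ'
      (by obtain ⟨_, h1⟩ := hx; obtain ⟨_, h2⟩ := hy; linarith)
    obtain ⟨hb1, hb2⟩ := abs_le.1 hb
    have h2 : (AA σ p.1 p.2 - AF p.1 p.2) ^ 2 + (AA σ p.1 p.2 - AF p.1 p.2) ^ 2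
        ≤ 200 * σ ^ 2 := by nlinarith
    calc euclNorm ((AA σ p.1 p.2, AA σ p.2 p.1) - F p)
        = Real.sqrt ((AA σ p.1 p.2 - AF p.1 p.2) ^ 2 + (AA σ p.1 p.2 - AF p.1 p.2) ^ 2) := by
          rw [hsub, euclNorm]
    _ ≤ Real.sqrt (200 * σ ^ 2) := Real.sqrt_le_sqrt h2
    _ < 15 * σ := by
          rw [show (15 : ℝ) * σ = Real.sqrt ((15 * σ) ^ 2) from
            (Real.sqrt_sq (by linarith)).symm]
          apply Real.sqrt_lt_sqrt (by positivity)
          nlinarith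
    _ ≤ ε := hσε
  · -- symmetry
    intro p _
    rfl
  · -- diagonal values
    intro x hx
    obtain ⟨hx0, hx1⟩ := hx
    refine ⟨?_, rfl⟩
    show AA σ x x ∈ Ioo (0:ℝ) 1
    have hxx2 : (x + x) / 2 = x := by ring
    rcases eq_or_lt_of_le (mul_nonneg (cut_nonneg σ ((x + x) / 2 - xstar))
        (cut_nonneg σ (x - x))) with h | h
    · have e1 : AA σ x x = AF x x := by rw [AA, ← h]; ring
      rw [e1, AF]
      have hd : 0 < x + x - x * x := by nlinarith
      constructor
      · apply div_pos (by nlinarith) hd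
      · rw [div_lt_one hd]; nlinarith
    · have hb := AA_pos_mem (σ := σ) (x := x) (y := x) hσ hσ' h
      obtain ⟨hb1, hb2⟩ := hb
      exact ⟨by linarith, by linarith⟩
  · -- J ⊆ Ioo 0 1
    intro x hx
    obtain ⟨hx1, hx2⟩ := hx
    exact ⟨by linarith, by linarith⟩
  · -- conjugacy with tent map
    intro t ht
    obtain ⟨ht0, ht1⟩ := ht
    have hmem : xstar + 2 * σ * t ∈ Icc xstar (xstar + 2 * σ) :=
      ⟨by nlinarith, by nlinarith⟩
    have h := htent _ hmem
    show AA σ (AA σ (xstar + 2 * σ * t) (xstar + 2 * σ * t))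
        (AA σ (xstar + 2 * σ * t) (xstar + 2 * σ * t)) = _
    rw [h, show xstar + 2 * σ * t - xstar - σ = σ * (2 * t - 1) from by ring,
      abs_mul, abs_of_pos hσ]
    ring
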